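/- For each fixed n ≥ 1, the sequence of Eulerian numbers k ↦ ⟨n,k⟩ is log-concave: ⟨n,k⟩² ≥ ⟨n,k-1⟩·⟨n,k+1⟩ for all 1 ≤ k ≤ n-2. -/

import Mathlib

/-- The number of descents of a permutation of `Fin n`. -/
noncomputable def descentCount {n : ℕ} (σ : Equiv.Perm (Fin n)) : ℕ :=
  {i : Fin n | ∃ h : (i : ℕ) + 1 < n, σ ⟨(i : ℕ) + 1, h⟩ < σ i}.ncard

/-- The Eulerian number `⟨n,k⟩`. -/
noncomputable def eulerian (n k : ℕ) : ℕ :=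
  {σ : Equiv.Perm (Fin n) | descentCount σ = k}.ncard

namespace EulerAux

open Equiv Finset

variable {n : ℕ}

def des {m : ℕ} (σ : Perm (Fin m)) (i : Fin m) : Prop :=
  ∃ h : (i : ℕ) + 1 < m, σ ⟨(i : ℕ) + 1, h⟩ < σ i

open Classical in
noncomputable def dset {m : ℕ} (σ : Perm (Fin m)) : Finset (Fin m) :=
  univ.filter (des σ)

open Classical in
lemma mem_dset {m : ℕ} {σ : Perm (Fin m)} {i : Fin m} : i ∈ dset σ ↔ des σ i := by
  simp [dset]

lemma descentCount_eq {m : ℕ} (σ : Perm (Fin m)) : descentCount σ = (dset σ).card := by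
  classical
  rw [descentCount, ← Set.ncard_coe_finset]
  congr 1
  ext i
  simp [mem_dset, des]

open Classical in
lemma descentCount_eq_sum {m : ℕ} (σ : Perm (Fin m)) :
    descentCount σ = ∑ i : Fin m, if des σ i then 1 else 0 := by
  rw [descentCount_eq, dset, card_filter]

open Classical in
noncomputable def eset (m k : ℕ) : Finset (Perm (Fin m)) :=
  univ.filter (fun σ => descentCount σ = k)

open Classical in
lemma eulerian_eq (m k : ℕ) : eulerian m k = (eset m k).card := by
  rw [eulerian, ← Set.ncard_coe_finset]
  congr 1
  ext σ
  simp [eset]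

def ins (p : Fin (n + 1)) (τ : Perm (Fin n)) : Perm (Fin (n + 1)) :=
  (finSuccEquiv' p).trans ((τ.optionCongr).trans (finSuccEquiv' (Fin.last n)).symm)

lemma ins_self (p : Fin (n + 1)) (τ : Perm (Fin n)) : ins p τ p = Fin.last n := by
  simp [ins]

lemma ins_succAbove (p : Fin (n + 1)) (τ : Perm (Fin n)) (j : Fin n) :
    ins p τ (p.succAbove j) = (τ j).castSucc := by
  simp [ins, finSuccEquiv'_succAbove, Fin.succAbove_last]

lemma ins_bijective :
    Function.Bijective (fun x : Fin (n + 1) × Perm (Fin n) => ins x.1 x.2) := by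
  constructor
  · rintro ⟨p, τ⟩ ⟨p', τ'⟩ h
    simp only at h
    have hp : p = p' := by
      have h1 : ins p' τ' p = Fin.last n := by rw [← h, ins_self]
      have h2 : ins p' τ' p' = Fin.last n := ins_self p' τ'
      exact (ins p' τ').injective (h1.trans h2.symm)
    subst hp
    have hτ : τ = τ' := by
      apply Equiv.ext
      intro j
      have := congrArg (fun σ : Perm (Fin (n + 1)) => σ (p.succAbove j)) h
      simp only [ins_succAbove] at this
      exact Fin.castSucc_injective n this
    rw [hτ]
  · intro σ
    set p := σ.symm (Fin.last n) with hp
    have hσp : σ p = Fin.last n := σ.apply_symm_apply _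
    have hne : ∀ j : Fin n, σ (p.succAbove j) ≠ Fin.last n := by
      intro j hj
      exact Fin.succAbove_ne p j (σ.injective (hj.trans hσp.symm))
    set f : Fin n → Fin n := fun j => (σ (p.succAbove j)).castPred (hne j) with hf
    have hfi : Function.Injective f := by
      intro j j' hjj
      have : σ (p.succAbove j) = σ (p.succAbove j') := by
        have := congrArg Fin.castSucc hjj
        simpa [hf, Fin.castSucc_castPred] using this
      exact Fin.succAbove_right_injective (σ.injective this)
    refine ⟨⟨p, Equiv.ofBijective f (Finite.injective_iff_bijective.mp hfi)⟩, ?_⟩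
    ext i
    simp only
    rcases eq_or_ne i p with rfl | hip
    · rw [ins_self, hσp]
    · obtain ⟨j, rfl⟩ := Fin.exists_succAbove_eq hip
      rw [ins_succAbove]
      simp [Equiv.ofBijective_apply, hf, Fin.castSucc_castPred]

lemma des_ins_self (p : Fin (n + 1)) (τ : Perm (Fin n)) :
    des (ins p τ) p ↔ p ≠ Fin.last n := by
  constructor
  · rintro ⟨h, -⟩ rfl
    simp [Fin.val_last] at h
  · intro hp
    have hv : (p : ℕ) + 1 < n + 1 := by
      have := Fin.val_lt_last hp
      omega
    refine ⟨hv, ?_⟩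
    rw [ins_self]
    have hne : (⟨(p : ℕ) + 1, hv⟩ : Fin (n + 1)) ≠ p := by
      intro h; have := congrArg Fin.val h; simp at this
    have : ins p τ ⟨(p : ℕ) + 1, hv⟩ ≠ Fin.last n := by
      rw [← ins_self p τ]
      exact fun h => hne ((ins p τ).injective h)
    exact Fin.lt_last_iff_ne_last.mpr this

lemma des_ins_succAbove (p : Fin (n + 1)) (τ : Perm (Fin n)) (j : Fin n) :
    des (ins p τ) (p.succAbove j) ↔ des τ j ∧ j.succ ≠ p := by
  rcases lt_or_ge j.castSucc p with hlt | hle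
  · rw [Fin.succAbove_of_castSucc_lt _ _ hlt]
    rcases eq_or_ne j.succ p with heq | hne
    · simp only [heq, ne_eq, not_true_eq_false, and_false, iff_false]
      rintro ⟨h, hlt2⟩
      have hidx : (⟨(j.castSucc : ℕ) + 1, h⟩ : Fin (n + 1)) = p := by
        rw [← heq]; apply Fin.ext; simp
      rw [hidx, ins_self] at hlt2
      exact absurd hlt2 (Fin.le_last _).not_gt
    · have hjsp : (j : ℕ) + 1 < (p : ℕ) := by
        have h1 : (j : ℕ) < (p : ℕ) := by simpa [Fin.lt_def] using hlt
        have h2 : (j : ℕ) + 1 ≠ (p : ℕ) := fun h => hne (Fin.ext (by simp [h]))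
        omega
      have hjn : (j : ℕ) + 1 < n := by
        have := p.isLt; omega
      have hidx : (⟨(j.castSucc : ℕ) + 1, by omega⟩ : Fin (n + 1))
          = p.succAbove ⟨(j : ℕ) + 1, hjn⟩ := by
        rw [Fin.succAbove_of_castSucc_lt _ _ (by simp [Fin.lt_def]; omega)]
        apply Fin.ext; simp
      constructor
      · rintro ⟨h, hlt2⟩
        refine ⟨⟨hjn, ?_⟩, hne⟩
        rw [hidx, ins_succAbove, ← Fin.succAbove_of_castSucc_lt _ _ hlt,
          ins_succAbove] at hlt2
        exact Fin.castSucc_lt_castSucc_iff.mp hlt2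
      · rintro ⟨⟨h, hlt2⟩, -⟩
        refine ⟨by simp only [Fin.coe_castSucc, Fin.val_succ]; omega, ?_⟩
        rw [hidx, ins_succAbove, ← Fin.succAbove_of_castSucc_lt _ _ hlt, ins_succAbove]
        exact Fin.castSucc_lt_castSucc_iff.mpr hlt2
  · rw [Fin.succAbove_of_le_castSucc _ _ hle]
    have hne : j.succ ≠ p := by
      intro h
      have h1 : (p : ℕ) ≤ (j : ℕ) := by simpa [Fin.le_def] using hle
      have h2 : (j : ℕ) + 1 = (p : ℕ) := by rw [← h]; simp
      omega
    simp only [hne, ne_eq, not_false_eq_true, and_true]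
    by_cases hjn : (j : ℕ) + 1 < n
    · have hle2 : p ≤ (⟨(j : ℕ) + 1, hjn⟩ : Fin n).castSucc := by
        simp only [Fin.le_def, Fin.coe_castSucc] at hle ⊢; omega
      have hidx : (⟨(j.succ : ℕ) + 1, by simp; omega⟩ : Fin (n + 1))
          = p.succAbove ⟨(j : ℕ) + 1, hjn⟩ := by
        rw [Fin.succAbove_of_le_castSucc _ _ hle2]
        apply Fin.ext; simp
      constructor
      · rintro ⟨h, hlt2⟩
        refine ⟨hjn, ?_⟩
        rw [hidx, ins_succAbove, ← Fin.succAbove_of_le_castSucc _ _ hle,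
          ins_succAbove] at hlt2
        exact Fin.castSucc_lt_castSucc_iff.mp hlt2
      · rintro ⟨h, hlt2⟩
        refine ⟨by simp only [Fin.coe_castSucc, Fin.val_succ]; omega, ?_⟩
        rw [hidx, ins_succAbove, ← Fin.succAbove_of_le_castSucc _ _ hle, ins_succAbove]
        exact Fin.castSucc_lt_castSucc_iff.mpr hlt2
    · constructor
      · rintro ⟨h, -⟩
        simp at h; omega
      · rintro ⟨h, -⟩
        omega

open Classical in
lemma dc_ins (p : Fin (n + 1)) (τ : Perm (Fin n)) :
    descentCount (ins p τ) =
      if p = Fin.last n ∨ ∃ j : Fin n, j.succ = p ∧ des τ j then descentCount τ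
      else descentCount τ + 1 := by
  rw [descentCount_eq_sum (ins p τ), Fin.sum_univ_succAbove _ p, descentCount_eq_sum τ]
  simp only [des_ins_succAbove]
  by_cases hE : ∃ j : Fin n, j.succ = p ∧ des τ j
  · obtain ⟨j0, hj0p, hj0d⟩ := hE
    have hplast : p ≠ Fin.last n := by
      obtain ⟨h, -⟩ := hj0d
      intro hp
      have := congrArg Fin.val hj0p
      simp [hp] at this
      omega
    have h1 : (if des (ins p τ) p then (1 : ℕ) else 0) = 1 := by
      simp [des_ins_self, hplast]
    rw [h1, if_pos (Or.inr ⟨j0, hj0p, hj0d⟩)]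
    have split : ∀ j : Fin n, (if des τ j then (1 : ℕ) else 0) =
        (if des τ j ∧ j.succ ≠ p then 1 else 0) + (if j = j0 then 1 else 0) := by
      intro j
      rcases eq_or_ne j j0 with rfl | hj
      · simp [hj0d, hj0p]
      · have hjs : j.succ ≠ p := fun h => hj (Fin.succ_injective _ (h.trans hj0p.symm))
        simp [hjs, hj]
    rw [Finset.sum_congr rfl (fun j _ => split j), Finset.sum_add_distrib,
      Finset.sum_ite_eq']
    simp
    omega
  · push_neg at hE
    have hcong : ∀ j : Fin n, (if des τ j ∧ j.succ ≠ p then (1 : ℕ) else 0)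
        = (if des τ j then 1 else 0) := by
      intro j
      rcases Classical.em (des τ j) with hd | hd
      · have hne : j.succ ≠ p := fun h => hE j h hd
        simp [hd, hne]
      · simp [hd]
    rw [Finset.sum_congr rfl (fun j _ => hcong j)]
    by_cases hpl : p = Fin.last n
    · rw [if_pos (Or.inl hpl)]
      simp [des_ins_self, hpl]
    · have hcond : ¬(p = Fin.last n ∨ ∃ j : Fin n, j.succ = p ∧ des τ j) := by
        rintro (h | ⟨j, hj1, hj2⟩)
        · exact hpl h
        · exact hE j hj1 hj2
      have h1 : (if des (ins p τ) p then (1 : ℕ) else 0) = 1 := by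
        simp [des_ins_self, hpl]
      rw [if_neg hcond, h1]
      omega

open Classical in
lemma card_C (τ : Perm (Fin n)) :
    (univ.filter fun p : Fin (n + 1) =>
      p = Fin.last n ∨ ∃ j : Fin n, j.succ = p ∧ des τ j).card = descentCount τ + 1 := by
  have heq : (univ.filter fun p : Fin (n + 1) =>
      p = Fin.last n ∨ ∃ j : Fin n, j.succ = p ∧ des τ j)
      = insert (Fin.last n) ((dset τ).image Fin.succ) := by
    ext p
    simp only [mem_filter, mem_univ, true_and, mem_insert, mem_image, mem_dset]
    constructor
    · rintro (h | ⟨j, hj1, hj2⟩)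
      · exact Or.inl h
      · exact Or.inr ⟨j, hj2, hj1⟩
    · rintro (h | ⟨j, hj1, hj2⟩)
      · exact Or.inl h
      · exact Or.inr ⟨j, hj2, hj1⟩
  rw [heq, Finset.card_insert_of_notMem,
    Finset.card_image_of_injective _ (Fin.succ_injective n), descentCount_eq]
  simp only [mem_image, mem_dset, not_exists]
  rintro j ⟨⟨h, -⟩, hj⟩
  have := congrArg Fin.val hj
  simp at this
  omega

open Classical in
lemma sum_ins (τ : Perm (Fin n)) (k : ℕ) :
    (∑ p : Fin (n + 1), if descentCount (ins p τ) = k then (1 : ℕ) else 0) =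
      if descentCount τ = k then descentCount τ + 1
      else if descentCount τ + 1 = k then n - descentCount τ else 0 := by
  have hcard := card_C τ
  have hub : descentCount τ + 1 ≤ n + 1 := by
    rw [← hcard]
    exact (Finset.card_filter_le _ _).trans (by simp)
  rw [← card_filter]
  by_cases h1 : descentCount τ = k
  · rw [if_pos h1]
    have : (univ.filter fun p : Fin (n + 1) => descentCount (ins p τ) = k)
        = univ.filter fun p : Fin (n + 1) =>
            p = Fin.last n ∨ ∃ j : Fin n, j.succ = p ∧ des τ j := by
      ext p
      simp only [mem_filter, mem_univ, true_and, dc_ins]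
      by_cases hC : p = Fin.last n ∨ ∃ j : Fin n, j.succ = p ∧ des τ j
      · simp [hC, h1]
      · simp only [hC, if_neg hC, iff_false, if_false]
        omega
    rw [this, hcard]
  · rw [if_neg h1]
    by_cases h2 : descentCount τ + 1 = k
    · rw [if_pos h2]
      have hneg : (univ.filter fun p : Fin (n + 1) => descentCount (ins p τ) = k)
          = univ.filter fun p : Fin (n + 1) =>
              ¬(p = Fin.last n ∨ ∃ j : Fin n, j.succ = p ∧ des τ j) := by
        ext p
        simp only [mem_filter, mem_univ, true_and, dc_ins]
        by_cases hC : p = Fin.last n ∨ ∃ j : Fin n, j.succ = p ∧ des τ j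
        · simp [hC, h1]
        · simp [hC, h2]
      have hadd := Finset.card_filter_add_card_filter_not
        (s := (univ : Finset (Fin (n + 1))))
        (fun p : Fin (n + 1) => p = Fin.last n ∨ ∃ j : Fin n, j.succ = p ∧ des τ j)
      rw [hneg]
      simp only [Finset.card_univ, Fintype.card_fin] at hadd
      omega
    · rw [if_neg h2]
      have : (univ.filter fun p : Fin (n + 1) => descentCount (ins p τ) = k) = ∅ := by
        ext p
        simp only [mem_filter, mem_univ, true_and, dc_ins, Finset.notMem_empty, iff_false]
        by_cases hC : p = Fin.last n ∨ ∃ j : Fin n, j.succ = p ∧ des τ j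
        · simp [hC, h1]
        · simp [hC, h2]
      rw [this, Finset.card_empty]

open Classical in
lemma eulerian_rec (k : ℕ) :
    eulerian (n + 1) (k + 1) = (k + 2) * eulerian n (k + 1) + (n - k) * eulerian n k := by
  rw [eulerian_eq, eset, card_filter]
  have hbij : (∑ σ : Perm (Fin (n + 1)), if descentCount σ = k + 1 then (1 : ℕ) else 0)
      = ∑ x : Fin (n + 1) × Perm (Fin n),
          if descentCount (ins x.1 x.2) = k + 1 then (1 : ℕ) else 0 :=
    (Fintype.sum_bijective (fun x : Fin (n + 1) × Perm (Fin n) => ins x.1 x.2)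
      ins_bijective _ _ (fun x => rfl)).symm
  rw [hbij, Fintype.sum_prod_type'
    (f := fun (p : Fin (n + 1)) (τ : Perm (Fin n)) =>
      if descentCount (ins p τ) = k + 1 then (1 : ℕ) else 0), Finset.sum_comm]
  have hτ : ∀ τ : Perm (Fin n),
      (∑ p : Fin (n + 1), if descentCount (ins p τ) = k + 1 then (1 : ℕ) else 0)
      = (if descentCount τ = k + 1 then (k + 2) else 0)
        + (if descentCount τ = k then n - k else 0) := by
    intro τ
    rw [sum_ins]
    by_cases h1 : descentCount τ = k + 1
    · have h2 : descentCount τ ≠ k := by omega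
      simp [h1, h2]
    · by_cases h2 : descentCount τ = k
      · have h3 : descentCount τ + 1 = k + 1 := by omega
        simp [h1, h2, h3]
      · have h3 : descentCount τ + 1 ≠ k + 1 := by omega
        simp [h1, h2, h3]
  rw [Finset.sum_congr rfl (fun τ _ => hτ τ), Finset.sum_add_distrib]
  congr 1
  · rw [← Finset.sum_filter, Finset.sum_const, smul_eq_mul, eulerian_eq, eset, mul_comm]
  · rw [← Finset.sum_filter, Finset.sum_const, smul_eq_mul, eulerian_eq, eset, mul_comm]

lemma eulerian_zero (m : ℕ) : eulerian m 0 = 1 := by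
  classical
  rw [eulerian_eq]
  have : eset m 0 = {1} := by
    ext σ
    simp only [eset, mem_filter, mem_univ, true_and, Finset.mem_singleton]
    rw [descentCount_eq, Finset.card_eq_zero, Finset.eq_empty_iff_forall_notMem]
    constructor
    · intro h
      rcases Nat.eq_zero_or_pos m with rfl | hm
      · exact Subsingleton.elim _ _
      · obtain ⟨m', rfl⟩ : ∃ m', m = m' + 1 := ⟨m - 1, by omega⟩
        have hsm : StrictMono σ := by
          rw [Fin.strictMono_iff_lt_succ]
          intro i
          have hnd : ¬ des σ i.castSucc := fun hd => h _ (mem_dset.mpr hd)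
          have hv : ((i.castSucc : ℕ)) + 1 < m' + 1 := by
            simp only [Fin.coe_castSucc]; omega
          have hidx : (⟨(i.castSucc : ℕ) + 1, hv⟩ : Fin (m' + 1)) = i.succ := by
            apply Fin.ext; simp
          have hnlt : ¬ σ i.succ < σ i.castSucc := by
            intro hlt
            exact hnd ⟨hv, by rwa [hidx]⟩
          have hne : σ i.castSucc ≠ σ i.succ := by
            intro hh
            have := σ.injective hh
            have := congrArg Fin.val this
            simp at this
          exact lt_of_le_of_ne (not_lt.mp hnlt) hne
        have hr : Set.range σ = Set.range (id : Fin (m' + 1) → Fin (m' + 1)) := by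
          rw [Set.range_id, Set.range_eq_univ.mpr σ.surjective]
        have := (hsm.range_inj strictMono_id).mp hr
        exact Equiv.ext (fun x => congrFun this x)
    · rintro rfl i hi
      obtain ⟨hlt, hdes⟩ := mem_dset.mp hi
      simp only [Perm.coe_one, id_eq] at hdes
      rw [Fin.lt_def] at hdes
      simp at hdes
  rw [this, Finset.card_singleton]

lemma eulerian_eq_zero {m k : ℕ} (hm : m ≤ k) (hk : 1 ≤ k) : eulerian m k = 0 := by
  classical
  rw [eulerian_eq]
  have : eset m k = ∅ := by
    ext σ
    simp only [eset, mem_filter, mem_univ, true_and, Finset.notMem_empty, iff_false]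
    intro hdc
    rcases Nat.eq_zero_or_pos m with rfl | hmpos
    · have : dset σ = ∅ := Finset.eq_empty_of_isEmpty _
      rw [descentCount_eq, this] at hdc
      simp at hdc
      omega
    · obtain ⟨m', rfl⟩ : ∃ m', m = m' + 1 := ⟨m - 1, by omega⟩
      have hsub : dset σ ⊆ univ.erase (Fin.last m') := by
        intro i hi
        obtain ⟨hlt, -⟩ := mem_dset.mp hi
        rw [Finset.mem_erase]
        refine ⟨?_, mem_univ _⟩
        intro hh
        rw [hh] at hlt
        simp at hlt
      have hcard := Finset.card_le_card hsub
      rw [Finset.card_erase_of_mem (mem_univ _)] at hcard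
      simp only [Finset.card_univ, Fintype.card_fin] at hcard
      rw [descentCount_eq] at hdc
      omega
  rw [this, Finset.card_empty]

lemma eulerian_pos : ∀ m k : ℕ, k < m → 0 < eulerian m k := by
  intro m
  induction m with
  | zero => intro k hk; omega
  | succ n ih =>
    intro k hk
    rcases Nat.eq_zero_or_pos k with rfl | hkpos
    · rw [eulerian_zero]; omega
    · obtain ⟨k', rfl⟩ : ∃ k', k = k' + 1 := ⟨k - 1, by omega⟩
      rw [eulerian_rec]
      have h1 : 0 < eulerian n k' := ih k' (by omega)
      have h2 : 0 < n - k' := by omega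
      have := Nat.mul_pos h2 h1
      omega

lemma eulerian_LC : ∀ m k : ℕ, 1 ≤ k →
    eulerian m (k - 1) * eulerian m (k + 1) ≤ eulerian m k ^ 2 := by
  intro m
  induction m with
  | zero =>
    intro k hk
    rw [eulerian_eq_zero (by omega) (by omega : 1 ≤ k + 1)]
    simp
  | succ n ih =>
    intro k hk
    by_cases hkn : n ≤ k
    · rw [eulerian_eq_zero (by omega) (by omega : 1 ≤ k + 1)]
      simp
    · push_neg at hkn
      rcases eq_or_lt_of_le hk with hk1 | hk2
      · -- k = 1
        obtain rfl : k = 1 := hk1.symm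
        obtain ⟨d, rfl⟩ : ∃ d, n = d + 2 := ⟨n - 2, by omega⟩
        have hb := ih 1 le_rfl
        rw [show (1 : ℕ) - 1 = 0 from rfl, eulerian_zero] at hb
        have rA2 : eulerian (d + 2 + 1) 2
            = 3 * eulerian (d + 2) 2 + (d + 1) * eulerian (d + 2) 1 := by
          have h := eulerian_rec (n := d + 2) (k := 1)
          rw [show d + 2 - 1 = d + 1 by omega] at h
          exact h
        have rA1 : eulerian (d + 2 + 1) 1
            = 2 * eulerian (d + 2) 1 + (d + 2) * eulerian (d + 2) 0 := by
          have h := eulerian_rec (n := d + 2) (k := 0)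
          rw [show d + 2 - 0 = d + 2 by omega] at h
          exact h
        show eulerian (d + 2 + 1) 0 * eulerian (d + 2 + 1) 2 ≤ eulerian (d + 2 + 1) 1 ^ 2
        rw [rA2, rA1, eulerian_zero, eulerian_zero]
        zify at hb ⊢
        nlinarith [hb, Int.ofNat_nonneg (eulerian (d + 2) 1),
          Int.ofNat_nonneg (eulerian (d + 2) 2)]
      · -- k ≥ 2
        obtain ⟨j, rfl⟩ : ∃ j, k = j + 2 := ⟨k - 2, by omega⟩
        obtain ⟨d, hn⟩ : ∃ d, n = j + 3 + d := ⟨n - (j + 3), by omega⟩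
        subst hn
        have h1 : eulerian (j + 3 + d) j * eulerian (j + 3 + d) (j + 2)
            ≤ eulerian (j + 3 + d) (j + 1) ^ 2 := by
          have := ih (j + 1) (by omega)
          simpa using this
        have h2 : eulerian (j + 3 + d) (j + 1) * eulerian (j + 3 + d) (j + 3)
            ≤ eulerian (j + 3 + d) (j + 2) ^ 2 := by
          have := ih (j + 2) (by omega)
          simpa using this
        have p1 : 0 < eulerian (j + 3 + d) (j + 1) := eulerian_pos _ _ (by omega)
        have p2 : 0 < eulerian (j + 3 + d) (j + 2) := eulerian_pos _ _ (by omega)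
        have h3 : eulerian (j + 3 + d) j * eulerian (j + 3 + d) (j + 3)
            ≤ eulerian (j + 3 + d) (j + 1) * eulerian (j + 3 + d) (j + 2) := by
          have hm := Nat.mul_le_mul h1 h2
          have hpos : 0 < eulerian (j + 3 + d) (j + 1) * eulerian (j + 3 + d) (j + 2) :=
            Nat.mul_pos p1 p2
          apply Nat.le_of_mul_le_mul_right _ hpos
          nlinarith [hm]
        have rA : eulerian (j + 3 + d + 1) (j + 2)
            = (j + 3) * eulerian (j + 3 + d) (j + 2)
              + (d + 2) * eulerian (j + 3 + d) (j + 1) := by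
          have h := eulerian_rec (n := j + 3 + d) (k := j + 1)
          rw [show j + 3 + d - (j + 1) = d + 2 by omega] at h
          exact h
        have rB : eulerian (j + 3 + d + 1) (j + 3)
            = (j + 4) * eulerian (j + 3 + d) (j + 3)
              + (d + 1) * eulerian (j + 3 + d) (j + 2) := by
          have h := eulerian_rec (n := j + 3 + d) (k := j + 2)
          rw [show j + 3 + d - (j + 2) = d + 1 by omega] at h
          exact h
        have rC : eulerian (j + 3 + d + 1) (j + 1)
            = (j + 2) * eulerian (j + 3 + d) (j + 1)
              + (d + 3) * eulerian (j + 3 + d) j := by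
          have h := eulerian_rec (n := j + 3 + d) (k := j)
          rw [show j + 3 + d - j = d + 3 by omega] at h
          exact h
        show eulerian (j + 3 + d + 1) (j + 1) * eulerian (j + 3 + d + 1) (j + 3)
          ≤ eulerian (j + 3 + d + 1) (j + 2) ^ 2
        rw [rA, rB, rC]
        zify at h1 h2 h3 ⊢
        nlinarith [h1, h2, h3,
          sq_nonneg ((eulerian (j + 3 + d) (j + 2) : ℤ) - (eulerian (j + 3 + d) (j + 1) : ℤ)),
          mul_le_mul_of_nonneg_left h2
            (by positivity : (0 : ℤ) ≤ ((j : ℤ) + 2) * ((j : ℤ) + 4)),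
          mul_le_mul_of_nonneg_left h3
            (by positivity :
              (0 : ℤ) ≤ ((j : ℤ) + 2) * ((d : ℤ) + 1) + ((d : ℤ) + 3) * ((j : ℤ) + 4)),
          mul_le_mul_of_nonneg_left h1
            (by positivity : (0 : ℤ) ≤ ((d : ℤ) + 3) * ((d : ℤ) + 1)),
          Int.ofNat_nonneg (eulerian (j + 3 + d) j),
          Int.ofNat_nonneg (eulerian (j + 3 + d) (j + 3))]

end EulerAux

/-- Log-concavity of Eulerian numbers:
`⟨n,k⟩² ≥ ⟨n,k-1⟩·⟨n,k+1⟩` for `1 ≤ k ≤ n-2`. -/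
theorem eulerian_log_concave (n k : ℕ) (hn : 1 ≤ n) (hk1 : 1 ≤ k) (hk2 : k ≤ n - 2) :
    eulerian n (k - 1) * eulerian n (k + 1) ≤ eulerian n k ^ 2 :=
  EulerAux.eulerian_LC n k hk1
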